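/- arXiv:2210.11003 — 2 statements merged into one kernel-verified Lean document; each statement's English description precedes it below -/
import Mathlib

section
/- Backward-induction identification (deterministic LTI version): let Y_j(ā^s) := Σ_{ℓ=1}^{s} ⟨ψ_j^{s−ℓ}, w_{a_ℓ}⟩, b_{j,s} := Σ_{ℓ=1}^{s} ⟨ψ_j^{s−ℓ}, w_{0̃}⟩, and γ_{j,k}(a) := ⟨ψ_j^{k}, w_a − w_{0̃}⟩. Fix a unit j with first treatment time t* (so A_{j,ℓ} = 0̃ for ℓ < t* and A_{j,t*} = a), and fix a lag t ≥ 1. Then γ_{j,t}(a) = Y_j(Ā_j^{t*+t}) − b_{j,t*+t} − Σ_{ℓ=0}^{t−1} γ_{j,ℓ}(A_{j, t*+t−ℓ}). -/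
open Matrix

/-- Backward-induction identification, deterministic LTI version.  For a unit first treated at
time `t*` (controls before `t*`, action `a` at `t*`) and a lag `t ≥ 1`, the lag-`t` blip
`γ_t(a) = ⟨ψ^t, w_a - w_c⟩` equals the outcome at time `t* + t` minus the baseline
`b_{t*+t}` minus the sum of the smaller-lag blips evaluated at the observed actions. -/
theorem stmt_8 (d : ℕ) (A : Type) [Fintype A]
    (ψ : ℕ → Fin d → ℝ) (w : A → Fin d → ℝ) (c : A)
    (Aobs : ℕ → A) (tstar : ℕ) (hts : 1 ≤ tstar) (a : A) (t : ℕ) (ht : 1 ≤ t)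
    (hctrl : ∀ ℓ, 1 ≤ ℓ → ℓ < tstar → Aobs ℓ = c) (ha : Aobs tstar = a) :
    ψ t ⬝ᵥ (w a - w c)
      = (∑ ℓ ∈ Finset.Icc 1 (tstar + t), ψ (tstar + t - ℓ) ⬝ᵥ w (Aobs ℓ))
        - (∑ ℓ ∈ Finset.Icc 1 (tstar + t), ψ (tstar + t - ℓ) ⬝ᵥ w c)
        - ∑ k ∈ Finset.range t, ψ k ⬝ᵥ (w (Aobs (tstar + t - k)) - w c) := by
  have hsum : (∑ ℓ ∈ Finset.Icc 1 (tstar + t), ψ (tstar + t - ℓ) ⬝ᵥ w (Aobs ℓ))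
      - (∑ ℓ ∈ Finset.Icc 1 (tstar + t), ψ (tstar + t - ℓ) ⬝ᵥ w c)
      = ∑ ℓ ∈ Finset.Icc 1 (tstar + t), ψ (tstar + t - ℓ) ⬝ᵥ (w (Aobs ℓ) - w c) := by
    rw [← Finset.sum_sub_distrib]
    simp [dotProduct_sub]
  rw [hsum]
  have hIcc : Finset.Icc 1 (tstar + t) = Finset.Ioc 0 (tstar + t) := by
    ext x; simp [Nat.lt_iff_add_one_le]
  rw [hIcc, ← Finset.sum_Ioc_consecutive
      (f := fun ℓ => ψ (tstar + t - ℓ) ⬝ᵥ (w (Aobs ℓ) - w c))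
      (Nat.zero_le (tstar - 1)) (by omega : tstar - 1 ≤ tstar + t)]
  have h1 : ∑ ℓ ∈ Finset.Ioc 0 (tstar - 1), ψ (tstar + t - ℓ) ⬝ᵥ (w (Aobs ℓ) - w c) = 0 := by
    apply Finset.sum_eq_zero
    intro ℓ hℓ
    simp only [Finset.mem_Ioc] at hℓ
    rw [hctrl ℓ hℓ.1 (by omega)]
    simp
  rw [h1, zero_add]
  have h2 : Finset.Ioc (tstar - 1) (tstar + t) = Finset.Icc tstar (tstar + t) := by
    ext x; simp; omega
  have h2b : Finset.Icc tstar (tstar + t) = Finset.Ico tstar (tstar + t + 1) := by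
    rw [Finset.Ico_add_one_right_eq_Icc]
  rw [h2, h2b, Finset.sum_Ico_eq_sum_range]
  have h3 : tstar + t + 1 - tstar = t + 1 := by omega
  rw [h3]
  have h4 : ∀ m ∈ Finset.range (t + 1),
      ψ (tstar + t - (tstar + m)) ⬝ᵥ (w (Aobs (tstar + m)) - w c)
      = (fun k => ψ k ⬝ᵥ (w (Aobs (tstar + t - k)) - w c)) (t + 1 - 1 - m) := by
    intro m hm
    simp only [Finset.mem_range] at hm
    have e1 : tstar + t - (tstar + m) = t + 1 - 1 - m := by omega
    have e2 : tstar + t - (t + 1 - 1 - m) = tstar + m := by omega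
    simp only [e1, e2]
  rw [Finset.sum_congr rfl h4,
      Finset.sum_range_reflect (fun k => ψ k ⬝ᵥ (w (Aobs (tstar + t - k)) - w c)) (t + 1),
      Finset.sum_range_succ]
  have h5 : tstar + t - t = tstar := by omega
  rw [h5, ha]
  ring
end

section
/- Deterministic correctness of the synthetic blip effects algorithm (LTV, noiseless): suppose every unit j's outcome is Y_j = Σ_{t=1}^T ⟨ψ_j^{T,t}, w_{A_{j,t}}⟩, that for every a ∈ A and t ∈ [T] the donor set I^a_t := {j : Ā^t_j = (0_1,…,0_{t−1},a)} is such that target unit n's factor stack lies in its span, i.e. (ψ_n^{T,1},…,ψ_n^{T,T}) = Σ_{j∈I^a_t} β_j^{n,I^a_t} (ψ_j^{T,1},…,ψ_j^{T,T}), and similarly for I^0_T := {j : Ā^T_j = 0̄^T}. Then the algorithm that (1) sets b̂_j = Y_j for j ∈ I^0_T and b̂_n = Σ_{j∈I^0_T} β_j^{n,I^0_T} Y_j otherwise, (2) sets γ̂_{j,T,T}(a) = Y_j − b̂_j for j ∈ I^a_T and propagates linearly otherwise, (3) recursively for t = T−1,…,1 sets γ̂_{j,T,t}(a) = Y_j −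 b̂_j − Σ_{ℓ=t+1}^T γ̂_{j,T,ℓ}(A_{j,ℓ}) for j ∈ I^a_t and propagates linearly otherwise, and (4) outputs Ŷ_n(ā^T) = Σ_{t=1}^T γ̂_{n,T,t}(a_t) + b̂_n, exactly recovers Ŷ_n(ā^T) = Σ_{t=1}^T ⟨ψ_n^{T,t}, w_{a_t}⟩ for every target sequence ā^T ∈ A^T. -/
open Matrix Finset

/-- The synthetic blip effects recursion (Steps 2–3 of the LTV algorithm), indexed by the lag
`k` from the final time `T` (so lag `k` corresponds to time `T - 1 - k`, 0-indexed).
For a donor unit `j ∈ donor k a` the blip is computed directly as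
`Y j - b̂ j - ∑_{k' < k} γ̂_{k'} j (A_{j, T-1-k'})`; otherwise it is propagated linearly with
the weights `βw`. -/
noncomputable def synthGam {ι A : Type} [DecidableEq ι] (Y bhat : ι → ℝ)
    (Aobs : ι → ℕ → A) (T : ℕ)
    (donor : ℕ → A → Finset ι) (βw : ι → ℕ → A → ι → ℝ) : ℕ → ι → A → ℝ
  | k => fun j a =>
    let dir : ι → ℝ := fun j' =>
      Y j' - bhat j' - ∑ k' : Fin k,
        synthGam Y bhat Aobs T donor βw k'.val j' (Aobs j' (T - 1 - k'.val))
    if j ∈ donor k a then dir j else ∑ j' ∈ donor k a, βw j k a j' * dir j'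
  termination_by k => k
  decreasing_by exact k'.isLt

private lemma sum_smul_dotProduct {m ι : Type} [Fintype m] (s : Finset ι)
    (c : ι → ℝ) (f : ι → m → ℝ) (v : m → ℝ) :
    (∑ i ∈ s, c i • f i) ⬝ᵥ v = ∑ i ∈ s, c i * (f i ⬝ᵥ v) := by
  simp only [dotProduct, Finset.sum_apply, Pi.smul_apply, smul_eq_mul,
    Finset.sum_mul, Finset.mul_sum]
  rw [Finset.sum_comm]
  exact Finset.sum_congr rfl fun i _ => Finset.sum_congr rfl fun j _ => by ring

/-- Deterministic correctness of the synthetic blip effects algorithm (LTV, noiseless):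
if every unit's outcome is `Y j = ∑_{τ<T} ⟨ψ_j^τ, w_{A_{j,τ}}⟩` and every unit's factor stack
lies in the span of each donor set `I^a_τ` (units under control before `τ` with action `a` at
`τ`) and of `I^0` (units under control throughout), then the algorithm — synthetic baseline
`b̂`, followed by the backward blip recursion `synthGam`, followed by
`Ŷ_n(ā) = ∑_τ γ̂_{n,τ}(a_τ) + b̂_n` — exactly recovers the counterfactual
`∑_{τ<T} ⟨ψ_n^τ, w_{a_τ}⟩` for every target unit `n` and sequence `ā`. -/
theorem stmt_16 (T d : ℕ) (hT : 0 < T)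
    (ι : Type) [Fintype ι] [DecidableEq ι] (A : Type) [DecidableEq A]
    (ψ : ι → ℕ → Fin d → ℝ) (w : A → Fin d → ℝ) (ctrl : ℕ → A)
    (Aobs : ι → ℕ → A) (Y : ι → ℝ)
    (hY : ∀ j, Y j = ∑ τ ∈ Finset.range T, ψ j τ ⬝ᵥ w (Aobs j τ))
    (Ia : ℕ → A → Finset ι)
    (hIa : ∀ τ a j, j ∈ Ia τ a ↔ ((∀ s, s < τ → Aobs j s = ctrl s) ∧ Aobs j τ = a))
    (I0 : Finset ι)
    (hI0 : ∀ j, j ∈ I0 ↔ ∀ s, s < T → Aobs j s = ctrl s)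
    (βA : ι → ℕ → A → ι → ℝ) (β0 : ι → ι → ℝ)
    (hspanA : ∀ i (τ : ℕ) (a : A), τ < T →
      ∀ s, s < T → ψ i s = ∑ j ∈ Ia τ a, βA i τ a j • ψ j s)
    (hspan0 : ∀ i s, s < T → ψ i s = ∑ j ∈ I0, β0 i j • ψ j s)
    (n : ι) (abar : ℕ → A) :
    (∑ τ ∈ Finset.range T,
        synthGam Y (fun j => if j ∈ I0 then Y j else ∑ j' ∈ I0, β0 j j' * Y j')
          Aobs T (fun k a => Ia (T - 1 - k) a) (fun i k a j => βA i (T - 1 - k) a j)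
          (T - 1 - τ) n (abar τ))
      + (if n ∈ I0 then Y n else ∑ j' ∈ I0, β0 n j' * Y j')
      = ∑ τ ∈ Finset.range T, ψ n τ ⬝ᵥ w (abar τ) := by
  classical
  set bhat : ι → ℝ := fun j => if j ∈ I0 then Y j else ∑ j' ∈ I0, β0 j j' * Y j' with hbhat
  -- the baseline is the all-control counterfactual
  have hb : ∀ j, bhat j = ∑ τ ∈ Finset.range T, ψ j τ ⬝ᵥ w (ctrl τ) := by
    intro j
    by_cases hj : j ∈ I0
    · simp only [hbhat, if_pos hj, hY j]
      refine Finset.sum_congr rfl fun τ hτ => ?_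
      rw [(hI0 j).1 hj τ (Finset.mem_range.1 hτ)]
    · simp only [hbhat, if_neg hj]
      calc ∑ j' ∈ I0, β0 j j' * Y j'
          = ∑ j' ∈ I0, ∑ τ ∈ Finset.range T, β0 j j' * (ψ j' τ ⬝ᵥ w (ctrl τ)) := by
            refine Finset.sum_congr rfl fun j' hj' => ?_
            rw [hY j', Finset.mul_sum]
            refine Finset.sum_congr rfl fun τ hτ => ?_
            rw [(hI0 j').1 hj' τ (Finset.mem_range.1 hτ)]
        _ = ∑ τ ∈ Finset.range T, ψ j τ ⬝ᵥ w (ctrl τ) := by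
            rw [Finset.sum_comm]
            refine Finset.sum_congr rfl fun τ hτ => ?_
            rw [hspan0 j τ (Finset.mem_range.1 hτ), sum_smul_dotProduct]
  set g : ι → ℕ → ℝ := fun j' τ => ψ j' τ ⬝ᵥ w (Aobs j' τ) - ψ j' τ ⬝ᵥ w (ctrl τ) with hg
  -- the key invariant of the recursion
  have key : ∀ k, k < T → ∀ j a,
      synthGam Y bhat Aobs T (fun k a => Ia (T - 1 - k) a)
          (fun i k a j => βA i (T - 1 - k) a j) k j a
        = ψ j (T - 1 - k) ⬝ᵥ w a - ψ j (T - 1 - k) ⬝ᵥ w (ctrl (T - 1 - k)) := by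
    intro k
    induction k using Nat.strong_induction_on with
    | _ k IH =>
      intro hk j a
      have hdir : ∀ j' ∈ Ia (T - 1 - k) a,
          Y j' - bhat j' - (∑ k' : Fin k,
              synthGam Y bhat Aobs T (fun k a => Ia (T - 1 - k) a)
                (fun i k a j => βA i (T - 1 - k) a j) k'.val j' (Aobs j' (T - 1 - k'.val)))
            = ψ j' (T - 1 - k) ⬝ᵥ w a - ψ j' (T - 1 - k) ⬝ᵥ w (ctrl (T - 1 - k)) := by
        intro j' hj'
        obtain ⟨hpre, hact⟩ := (hIa _ _ _).1 hj'
        have h1 : Y j' - bhat j' = ∑ τ ∈ Finset.range T, g j' τ := by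
          rw [hY j', hb j', ← Finset.sum_sub_distrib]
        have h2 : (∑ k' : Fin k,
              synthGam Y bhat Aobs T (fun k a => Ia (T - 1 - k) a)
                (fun i k a j => βA i (T - 1 - k) a j) k'.val j' (Aobs j' (T - 1 - k'.val)))
            = ∑ k' ∈ Finset.range k, g j' (T - 1 - k') := by
          rw [Fin.sum_univ_eq_sum_range (fun k' => synthGam Y bhat Aobs T
            (fun k a => Ia (T - 1 - k) a) (fun i k a j => βA i (T - 1 - k) a j) k' j'
            (Aobs j' (T - 1 - k'))) k]
          refine Finset.sum_congr rfl fun k' hk' => ?_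
          exact IH k' (Finset.mem_range.1 hk') (lt_trans (Finset.mem_range.1 hk') hk) j' _
        have h3 : ∑ k' ∈ Finset.range k, g j' (T - 1 - k') = ∑ τ ∈ Finset.Ico (T - k) T, g j' τ := by
          refine Finset.sum_nbij' (fun k' => T - 1 - k') (fun τ => T - 1 - τ) ?_ ?_ ?_ ?_ ?_
          · intro k' hk'
            have := Finset.mem_range.1 hk'
            simp only [Finset.mem_Ico]; omega
          · intro τ hτ
            have := Finset.mem_Ico.1 hτ
            simp only [Finset.mem_range]; omega
          · intro k' hk'
            have := Finset.mem_range.1 hk'; omega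
          · intro τ hτ
            have := Finset.mem_Ico.1 hτ; omega
          · intro k' _; rfl
        have h4 : ∑ τ ∈ Finset.range T, g j' τ
            = (∑ τ ∈ Finset.range (T - 1 - k), g j' τ) + g j' (T - 1 - k)
              + ∑ τ ∈ Finset.Ico (T - k) T, g j' τ := by
          have hTk : T - k = (T - 1 - k) + 1 := by omega
          rw [Finset.range_eq_Ico, ← Finset.sum_Ico_consecutive _ (Nat.zero_le (T - k)) (by omega : T - k ≤ T),
            ← Finset.range_eq_Ico, hTk, Finset.sum_range_succ]
        have h5 : ∑ τ ∈ Finset.range (T - 1 - k), g j' τ = 0 := by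
          refine Finset.sum_eq_zero fun τ hτ => ?_
          have := Finset.mem_range.1 hτ
          simp only [hg]
          rw [hpre τ this, sub_self]
        have h6 : g j' (T - 1 - k) = ψ j' (T - 1 - k) ⬝ᵥ w a - ψ j' (T - 1 - k) ⬝ᵥ w (ctrl (T - 1 - k)) := by
          simp only [hg]; rw [hact]
        rw [h1, h2, h3, h4, h5, h6]; ring
      rw [synthGam]
      simp only
      by_cases hj : j ∈ Ia (T - 1 - k) a
      · simp only [if_pos hj]
        exact hdir j hj
      · simp only [if_neg hj]
        have hsp := hspanA j (T - 1 - k) a (by omega) (T - 1 - k) (by omega)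
        calc ∑ j' ∈ Ia (T - 1 - k) a, βA j (T - 1 - k) a j' *
              (Y j' - bhat j' - ∑ k' : Fin k,
                synthGam Y bhat Aobs T (fun k a => Ia (T - 1 - k) a)
                  (fun i k a j => βA i (T - 1 - k) a j) k'.val j' (Aobs j' (T - 1 - k'.val)))
            = ∑ j' ∈ Ia (T - 1 - k) a, βA j (T - 1 - k) a j' *
                (ψ j' (T - 1 - k) ⬝ᵥ w a - ψ j' (T - 1 - k) ⬝ᵥ w (ctrl (T - 1 - k))) := by
              exact Finset.sum_congr rfl fun j' hj' => by rw [hdir j' hj']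
          _ = ψ j (T - 1 - k) ⬝ᵥ w a - ψ j (T - 1 - k) ⬝ᵥ w (ctrl (T - 1 - k)) := by
              rw [hsp, sum_smul_dotProduct, sum_smul_dotProduct, ← Finset.sum_sub_distrib]
              exact Finset.sum_congr rfl fun j' _ => by ring
  have hmain : ∀ τ ∈ Finset.range T,
      synthGam Y bhat Aobs T (fun k a => Ia (T - 1 - k) a)
          (fun i k a j => βA i (T - 1 - k) a j) (T - 1 - τ) n (abar τ)
        = ψ n τ ⬝ᵥ w (abar τ) - ψ n τ ⬝ᵥ w (ctrl τ) := by
    intro τ hτ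
    have hτT := Finset.mem_range.1 hτ
    have h := key (T - 1 - τ) (by omega) n (abar τ)
    have : T - 1 - (T - 1 - τ) = τ := by omega
    rwa [this] at h
  have hbn : (if n ∈ I0 then Y n else ∑ j' ∈ I0, β0 n j' * Y j') = bhat n := rfl
  rw [hbn, Finset.sum_congr rfl hmain, hb n, ← Finset.sum_add_distrib]
  exact Finset.sum_congr rfl fun τ _ => by ring
end
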